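/- Let Φ be a reduced root system and M a ℤ-module. The signed reversal operators commute with the coboundary: ρ̂^{n+1} ∘ dⁿ = dⁿ ∘ ρ̂ⁿ as maps Cⁿ(Φ,M) → Cⁿ⁺¹(Φ,M), for every n ≥ 1. -/

import Mathlib

open scoped RealInnerProductSpace

/-- A reduced root system `Φ` in a real inner product space `V`:
a finite set of nonzero vectors spanning `V`, closed under the reflections it determines,
with integral Cartan numbers, such that the only multiples of a root in `Φ` are `±α`. -/
structure ReducedRootSystem (V : Type) [NormedAddCommGroup V] [InnerProductSpace ℝ V] :
    Type where
  roots : Set V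
  finite : roots.Finite
  nonzero : ∀ α ∈ roots, α ≠ 0
  spans : Submodule.span ℝ roots = ⊤
  reflect_mem : ∀ α ∈ roots, ∀ β ∈ roots, β - (2 * ⟪β, α⟫ / ⟪α, α⟫) • α ∈ roots
  integral : ∀ α ∈ roots, ∀ β ∈ roots, ∃ n : ℤ, 2 * ⟪β, α⟫ / ⟪α, α⟫ = (n : ℝ)
  reduced : ∀ α ∈ roots, ∀ t : ℝ, t • α ∈ roots → t = 1 ∨ t = -1

variable {V : Type} [NormedAddCommGroup V] [InnerProductSpace ℝ V]

/-- `Φ₀ = Φ ∪ {0}`. -/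
def rootsZero (Φ : ReducedRootSystem V) : Set V := insert 0 Φ.roots

/-- Contraction of a tuple at position `j` (adding the `j`-th and `(j+1)`-st entries). -/
def contractAt (l : List V) (j : ℕ) : List V :=
  l.take j ++ (l.getD j 0 + l.getD (j + 1) 0) :: l.drop (j + 2)

/-- `IsRootChainAux Φ n l`: the tuple `l` of length `n` is a generator of `T_n(Φ)`:
`T₁(Φ) = Φ₀`, and an `n`-tuple with entries in `Φ₀` lies in `T_n(Φ)` iff all its
contractions lie in `T_{n-1}(Φ)`. -/
def IsRootChainAux (Φ : ReducedRootSystem V) : ℕ → List V → Prop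
  | 0, _ => False
  | 1, l => ∃ r ∈ rootsZero Φ, l = [r]
  | n + 2, l => l.length = n + 2 ∧ (∀ r ∈ l, r ∈ rootsZero Φ) ∧
      ∀ j, j + 1 < l.length → IsRootChainAux Φ (n + 1) (contractAt l j)

/-- `l` is a generator of `T_{l.length}(Φ)`. -/
def IsRootChain (Φ : ReducedRootSystem V) (l : List V) : Prop := IsRootChainAux Φ l.length l

open Classical in
/-- Evaluation of a cochain on a chain generator: tuples containing `0` are identified with
the zero chain `0ₙ`, on which any cochain vanishes. -/
noncomputable def chainEv {M : Type} [Zero M] (ω : List V → M) (l : List V) : M :=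
  if (0 : V) ∈ l then 0 else ω l

/-- The coboundary operator `dⁿ` on cochains, `dⁿωⁿ(r₀|⋯|rₙ) = ωⁿ(∂ⁿ[r₀|⋯|rₙ])`. -/
noncomputable def cobd {M : Type} [AddCommGroup M] (ω : List V → M) (l : List V) : M :=
  chainEv ω l.tail
    + (∑ j ∈ Finset.range (l.length - 1), ((-1 : ℤ) ^ (j + 1)) • chainEv ω (contractAt l j))
    - ((-1 : ℤ) ^ (l.length - 1)) • chainEv ω l.dropLast

/-- `κₙ = C(n+1,2) + 1`. -/
def kappa (n : ℕ) : ℕ := Nat.choose (n + 1) 2 + 1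

/-- The signed reversal operator `ρ̂ⁿ` on `n`-cochains: `(ρ̂ⁿω)(φ) = (-1)^{κₙ} ω(ρⁿφ)`. -/
noncomputable def rhoHat {M : Type} [AddCommGroup M] (n : ℕ) (ω : List V → M)
    (l : List V) : M :=
  ((-1 : ℤ) ^ kappa n) • ω l.reverse

/-
Reversing a chain reverses the order of the faces of `∂`: dropping the first entry becomes
dropping the last, and contracting at `j` becomes contracting at `n - 1 - j`, whose sign
differs by `(-1)^(n+1)`. Hence `d(ω ∘ ρ) = (-1)^(n+1) (dω) ∘ ρ` on `(n+1)`-chains, and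
`κ_{n+1} = κ_n + (n + 1)` absorbs exactly this sign.
-/

section

variable {E : Type} [NormedAddCommGroup E] {M : Type} [AddCommGroup M]

lemma reverse_contractAt (l : List E) {j : ℕ} (h : j + 1 < l.length) :
    (contractAt l j).reverse = contractAt l.reverse (l.length - 2 - j) := by
  have getD_reverse : ∀ i < l.length, l.reverse.getD (l.length - 1 - i) 0 = l.getD i 0 := by
    intro i hi
    rw [List.getD_eq_getElem _ 0 (by rw [List.length_reverse]; omega), List.getD_eq_getElem _ 0 hi,
      List.getElem_reverse]
    congr 1; omega
  rw [contractAt, contractAt, List.reverse_append, List.reverse_cons, List.reverse_drop,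
    List.reverse_take, show l.length - 2 - j = l.length - 1 - (j + 1) by omega,
    getD_reverse _ h, show l.length - 1 - (j + 1) + 1 = l.length - 1 - j by omega,
    getD_reverse _ (by omega), add_comm (l.getD j 0), List.append_assoc, List.singleton_append]
  rw [show l.length - (j + 2) = l.length - 1 - (j + 1) by omega,
    show l.length - j = l.length - 1 - (j + 1) + 2 by omega]

lemma chainEv_smul (c : ℤ) (ω : List E → M) (t : List E) :
    chainEv (c • ω) t = c • chainEv ω t := by
  unfold chainEv
  split_ifs <;> simp

lemma chainEv_comp_reverse (ω : List E → M) (t : List E) :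
    chainEv (fun s => ω s.reverse) t = chainEv ω t.reverse := by
  by_cases h : (0 : E) ∈ t <;> simp [chainEv, h]

lemma cobd_smul (c : ℤ) (ω : List E → M) (l : List E) :
    cobd (c • ω) l = c • cobd ω l := by
  simp only [cobd, chainEv_smul, smul_sub, smul_add, Finset.smul_sum, smul_comm c]

lemma cobd_comp_reverse (ω : List E → M) (l : List E) :
    cobd (fun t => ω t.reverse) l = (-1 : ℤ) ^ l.length • cobd ω l.reverse := by
  obtain rfl | ⟨n, hlen⟩ : l = [] ∨ ∃ n, l.length = n + 1 := by
    cases l <;> simp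
  · simp [cobd]
  have hsum : ∑ j ∈ Finset.range n, (-1 : ℤ) ^ (j + 1) • chainEv ω (contractAt l j).reverse
      = (-1 : ℤ) ^ (n + 1) •
        ∑ k ∈ Finset.range n, (-1 : ℤ) ^ (k + 1) • chainEv ω (contractAt l.reverse k) := by
    rw [Finset.smul_sum, ← Finset.sum_range_reflect]
    refine Finset.sum_congr rfl fun j hj => ?_
    have hj : j < n := Finset.mem_range.mp hj
    rw [reverse_contractAt l (by omega), smul_smul, ← pow_add, hlen,
      show n + 1 - 2 - (n - 1 - j) = j by omega]
    congr 1
    exact neg_one_pow_congr (by rw [Nat.even_iff, Nat.even_iff]; omega)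
  simp only [cobd, chainEv_comp_reverse, List.length_reverse, hlen, Nat.add_sub_cancel,
    List.tail_reverse, List.dropLast_reverse, hsum]
  rcases Nat.even_or_odd n with hn | hn <;>
    simp only [pow_succ, hn.neg_one_pow, Int.reduceNeg, mul_neg, mul_one, neg_neg, neg_smul,
      one_smul, smul_neg, smul_sub, smul_add, Finset.sum_neg_distrib, sub_neg_eq_add] <;> abel

end

lemma kappa_succ (n : ℕ) : kappa (n + 1) = kappa n + (n + 1) := by
  simp only [kappa, Nat.choose_succ_succ' (n + 1), Nat.choose_one_right]
  ring

theorem rhoHat_comm_coboundary_general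
    {V : Type} [NormedAddCommGroup V]
    (M : Type) [AddCommGroup M] (n : ℕ)
    (ω : List V → M) (l : List V) (hlen : l.length = n + 1) :
    rhoHat (n + 1) (cobd ω) l = cobd (rhoHat n ω) l := by
  have hrhoHat : rhoHat n ω = (-1 : ℤ) ^ kappa n • fun t => ω t.reverse := rfl
  rw [hrhoHat, cobd_smul, cobd_comp_reverse, smul_smul, ← pow_add, hlen, ← kappa_succ]
  rfl

/-- The signed reversal operators commute with the coboundary:
`ρ̂ⁿ⁺¹ ∘ dⁿ = dⁿ ∘ ρ̂ⁿ` as maps `Cⁿ(Φ,M) → Cⁿ⁺¹(Φ,M)`, for every `n ≥ 1`,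
i.e. the two sides agree on every chain in `T_{n+1}(Φ)`. -/
theorem rhoHat_comm_coboundary
    {V : Type} [NormedAddCommGroup V] [InnerProductSpace ℝ V] [FiniteDimensional ℝ V]
    (Φ : ReducedRootSystem V) (M : Type) [AddCommGroup M] (n : ℕ) (hn : 1 ≤ n)
    (ω : List V → M) (l : List V) (hlen : l.length = n + 1) (hl : IsRootChain Φ l) :
    rhoHat (n + 1) (cobd ω) l = cobd (rhoHat n ω) l :=
  rhoHat_comm_coboundary_general M n ω l hlen
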